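/- The left-most (nord-west) alignment of X_1…X_n and Y_1…Y_n coincides with the highest alignment: for every t = 1,…,k one has (i^w_t, j^w_t) = (i^h_t, j^h_t). -/
import Mathlib


open MeasureTheory ProbabilityTheory Filter Set
open scoped ENNReal NNReal Topology

noncomputable section

namespace PaperLCS

/-- The binary entropy function `h(x) = -x log₂ x - (1-x) log₂ (1-x)`. -/
def binEnt (x : ℝ) : ℝ := -x * Real.logb 2 x - (1 - x) * Real.logb 2 (1 - x)

variable {A : Type*}

/-- `(i, j)` is an alignment of the sequences `X₁ … X_{nx}` and `Y₁ … Y_{ny}`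
(1-based indexing) of length `k`. -/
def IsAlignment (X Y : ℕ → A) (nx ny k : ℕ) (i j : Fin k → ℕ) : Prop :=
  StrictMono i ∧ StrictMono j ∧
    (∀ t, 1 ≤ i t ∧ i t ≤ nx) ∧ (∀ t, 1 ≤ j t ∧ j t ≤ ny) ∧
    ∀ t, X (i t) = Y (j t)

/-- `L(X₁…X_{nx}; Y₁…Y_{ny})`, the length of the longest common subsequence. -/
def lcsLen (X Y : ℕ → A) (nx ny : ℕ) : ℕ :=
  sSup {k | ∃ i j : Fin k → ℕ, IsAlignment X Y nx ny k i j}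

/-- An optimal alignment: an alignment of maximal length. -/
def IsOptimal (X Y : ℕ → A) (nx ny k : ℕ) (i j : Fin k → ℕ) : Prop :=
  IsAlignment X Y nx ny k i j ∧ k = lcsLen X Y nx ny

/-- The highest alignment: the optimal alignment such that for every `t`,
`j t` is maximal among all optimal alignments, and `i t` is minimal among the optimal
alignments attaining this maximal `j t`. -/
def IsHighest (X Y : ℕ → A) (nx ny k : ℕ) (i j : Fin k → ℕ) : Prop :=
  IsOptimal X Y nx ny k i j ∧
    ∀ i' j' : Fin k → ℕ, IsOptimal X Y nx ny k i' j' →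
      ∀ t, j' t ≤ j t ∧ (j' t = j t → i t ≤ i' t)

/-- The lowest alignment. -/
def IsLowest (X Y : ℕ → A) (nx ny k : ℕ) (i j : Fin k → ℕ) : Prop :=
  IsOptimal X Y nx ny k i j ∧
    ∀ i' j' : Fin k → ℕ, IsOptimal X Y nx ny k i' j' →
      ∀ t, j t ≤ j' t ∧ (j' t = j t → i' t ≤ i t)

/-- The left-most (nord-west) alignment. -/
def IsLeftmost (X Y : ℕ → A) (nx ny k : ℕ) (i j : Fin k → ℕ) : Prop :=
  IsOptimal X Y nx ny k i j ∧
    ∀ i' j' : Fin k → ℕ, IsOptimal X Y nx ny k i' j' →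
      ∀ t, i t ≤ i' t ∧ (i' t = i t → j' t ≤ j t)


/-- Any alignment of `X₁…X_{nx}` with anything has length at most `nx`. -/
theorem align_len_le {A : Type*} {X Y : ℕ → A} {nx ny k : ℕ} {i j : Fin k → ℕ}
    (h : IsAlignment X Y nx ny k i j) : k ≤ nx := by
  obtain ⟨hmi, hmj, hbi, hbj, hm⟩ := h
  have hf : Function.Injective
      (fun t : Fin k => (⟨i t - 1, by have := hbi t; omega⟩ : Fin nx)) := by
    intro a b hab
    have h1 := hbi a
    have h2 := hbi b
    have h3 : i a - 1 = i b - 1 := congrArg Fin.val hab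
    exact hmi.injective (by omega)
  calc k = Fintype.card (Fin k) := (Fintype.card_fin k).symm
    _ ≤ Fintype.card (Fin nx) := Fintype.card_le_of_injective _ hf
    _ = nx := Fintype.card_fin nx

theorem bddAbove_align {A : Type*} (X Y : ℕ → A) (nx ny : ℕ) :
    BddAbove {k | ∃ i j : Fin k → ℕ, IsAlignment X Y nx ny k i j} := by
  refine ⟨nx, fun m hm => ?_⟩
  obtain ⟨i, j, h⟩ := hm
  exact align_len_le h

/-- The left-most (nord-west) alignment of `X₁…X_n` and `Y₁…Y_n`
coincides with the highest alignment. -/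
theorem leftmost_eq_highest {A : Type*} [Fintype A] (X Y : ℕ → A) (n k : ℕ)
    (ih jh : Fin k → ℕ) (hH : IsHighest X Y n n k ih jh)
    (iw jw : Fin k → ℕ) (hW : IsLeftmost X Y n n k iw jw) :
    ∀ t : Fin k, iw t = ih t ∧ jw t = jh t := by
  intro t
  have h1 := hH.2 iw jw hW.1 t   -- jw t ≤ jh t ∧ (jw t = jh t → ih t ≤ iw t)
  have h2 := hW.2 ih jh hH.1 t   -- iw t ≤ ih t ∧ (ih t = iw t → jh t ≤ jw t)
  by_cases hi : iw t = ih t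
  · exact ⟨hi, le_antisymm h1.1 (h2.2 hi.symm)⟩
  by_cases hj : jw t = jh t
  · exact absurd (le_antisymm h2.1 (h1.2 hj)) hi
  exfalso
  have hilt : iw t < ih t := lt_of_le_of_ne h2.1 hi
  have hjlt : jw t < jh t := lt_of_le_of_ne h1.1 hj
  obtain ⟨⟨hmiw, hmjw, hbiw, hbjw, hmw⟩, hkw⟩ := hW.1
  obtain ⟨⟨hmih, hmjh, hbih, hbjh, hmh⟩, hkh⟩ := hH.1
  -- build an alignment of length k+1
  set i'' : Fin (k + 1) → ℕ := fun s =>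
    if h : (s : ℕ) ≤ (t : ℕ) then iw ⟨s, lt_of_le_of_lt h t.isLt⟩
    else ih ⟨(s : ℕ) - 1, by omega⟩ with hi''
  set j'' : Fin (k + 1) → ℕ := fun s =>
    if h : (s : ℕ) ≤ (t : ℕ) then jw ⟨s, lt_of_le_of_lt h t.isLt⟩
    else jh ⟨(s : ℕ) - 1, by omega⟩ with hj''
  have key : ∀ (f g : Fin k → ℕ), StrictMono f → StrictMono g →
      f t < g t → StrictMono (fun s : Fin (k + 1) =>
        if h : (s : ℕ) ≤ (t : ℕ) then f ⟨s, lt_of_le_of_lt h t.isLt⟩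
        else g ⟨(s : ℕ) - 1, by omega⟩) := by
    intro f g hf hg hfg a b hab
    replace hab : (a : ℕ) < (b : ℕ) := hab
    by_cases hb : (b : ℕ) ≤ (t : ℕ)
    · have ha : (a : ℕ) ≤ (t : ℕ) := by omega
      simp only [dif_pos ha, dif_pos hb]
      exact hf (by exact hab)
    · by_cases ha : (a : ℕ) ≤ (t : ℕ)
      · simp only [dif_pos ha, dif_neg hb]
        calc f ⟨a, lt_of_le_of_lt ha t.isLt⟩ ≤ f t := hf.monotone (by exact ha)
          _ < g t := hfg
          _ ≤ g ⟨(b : ℕ) - 1, by omega⟩ := hg.monotone (by show (t : ℕ) ≤ (b : ℕ) - 1; omega)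
      · simp only [dif_neg ha, dif_neg hb]
        exact hg (by show (a : ℕ) - 1 < (b : ℕ) - 1; omega)
  have hA : IsAlignment X Y n n (k + 1) i'' j'' := by
    refine ⟨key iw ih hmiw hmih hilt, key jw jh hmjw hmjh hjlt, ?_, ?_, ?_⟩
    · intro s
      simp only [hi'']
      split_ifs with h
      · exact hbiw _
      · exact hbih _
    · intro s
      simp only [hj'']
      split_ifs with h
      · exact hbjw _
      · exact hbjh _
    · intro s
      simp only [hi'', hj'']
      split_ifs with h
      · exact hmw _
      · exact hmh _
  have hle : k + 1 ≤ lcsLen X Y n n :=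
    le_csSup (bddAbove_align X Y n n) ⟨i'', j'', hA⟩
  omega

end PaperLCS
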